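/- Let P = (D_A, D_B, Φ, A) be an MBSD instance with an arbitrary LTLf mapping specification Φ over Prop^A ∪ Prop^B and stop agent A. Let F_Φ = (2^{Prop^A ∪ Prop^B}, Q, q0, η, acc) be a DFA accepting exactly the finite nonempty words over 2^{Prop^A ∪ Prop^B} that satisfy Φ, and let G_P = (𝒜, Safe(g)) be the safety game on the product arena: U = V = S × T × Q; u0 = (s0, t0, η(q0, λ^A(s0) ∪ λ^B(t0))); ((s,t,q),(s',t,q)) ∈ α iff (s,s') ∈ δ^A; ((s,t,q),(s,t',q')) ∈ β iff (t,t') ∈ δ^B and η(q, λ^A(s) ∪ λ^B(t')) = q'; g = {(s,t,q) ∈ U : q ∈ acc}. Then P has a solution if and only if Player 2 has a winning strategy in G_P. -/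

import Mathlib

/-! ### Boolean formulas -/

inductive BForm (P : Type) : Type
  | tt : BForm P
  | atom : P → BForm P
  | neg : BForm P → BForm P
  | conj : BForm P → BForm P → BForm P

namespace BForm

/-- Satisfaction of a Boolean formula by the set `X` of true propositions. -/
def sat {P : Type} (X : Set P) : BForm P → Prop
  | .tt => True
  | .atom p => p ∈ X
  | .neg φ => ¬ sat X φ
  | .conj φ ψ => sat X φ ∧ sat X ψ

def imp {P : Type} (φ ψ : BForm P) : BForm P := .neg (.conj φ (.neg ψ))

def map {P Q : Type} (f : P → Q) : BForm P → BForm Q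
  | .tt => .tt
  | .atom p => .atom (f p)
  | .neg φ => .neg (map f φ)
  | .conj φ ψ => .conj (map f φ) (map f ψ)

end BForm

/-! ### LTLf formulas and finite-word semantics -/

inductive LTLf (P : Type) : Type
  | tt : LTLf P
  | atom : P → LTLf P
  | neg : LTLf P → LTLf P
  | conj : LTLf P → LTLf P → LTLf P
  | next : LTLf P → LTLf P
  | untl : LTLf P → LTLf P → LTLf P

namespace LTLf

/-- Satisfaction on the finite word `π 0, …, π n` at position `i`. -/
def sat {P : Type} (π : ℕ → Set P) (n : ℕ) : ℕ → LTLf P → Prop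
  | _, .tt => True
  | i, .atom p => p ∈ π i
  | i, .neg φ => ¬ sat π n i φ
  | i, .conj φ ψ => sat π n i φ ∧ sat π n i ψ
  | i, .next φ => i + 1 ≤ n ∧ sat π n (i + 1) φ
  | i, .untl φ ψ => ∃ j, i ≤ j ∧ j ≤ n ∧ sat π n j ψ ∧ ∀ m, i ≤ m → m < j → sat π n m φ

def disj {P : Type} (φ ψ : LTLf P) : LTLf P := .neg (.conj (.neg φ) (.neg ψ))
def imp {P : Type} (φ ψ : LTLf P) : LTLf P := disj (.neg φ) ψ
def ev {P : Type} (φ : LTLf P) : LTLf P := .untl .tt φ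
def always {P : Type} (φ : LTLf P) : LTLf P := .neg (ev (.neg φ))
/-- Finite conjunction `⋀_{i=1}^k f i`. -/
def iconj {P : Type} {k : ℕ} (f : Fin k → LTLf P) : LTLf P :=
  ((List.finRange k).map f).foldr .conj .tt

end LTLf

def BForm.toLTLf {P : Type} : BForm P → LTLf P
  | .tt => .tt
  | .atom p => .atom p
  | .neg φ => .neg φ.toLTLf
  | .conj φ ψ => .conj φ.toLTLf ψ.toLTLf

/-! ### Dynamic domains, traces, strategies, solutions -/

structure DynDom (P S : Type) where
  init : S
  δ : S → S → Prop
  label : S → Set P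

/-- `τ 0 … τ n` is a (finite) trace of `D`. -/
def IsTrace {P S : Type} (D : DynDom P S) (τ : ℕ → S) (n : ℕ) : Prop :=
  τ 0 = D.init ∧ ∀ i, i < n → D.δ (τ i) (τ (i + 1))

def IsInfTrace {P S : Type} (D : DynDom P S) (τ : ℕ → S) : Prop :=
  τ 0 = D.init ∧ ∀ i, D.δ (τ i) (τ (i + 1))

/-- The prefix `τ 0 … τ j` as a list. -/
def pref {S : Type} (τ : ℕ → S) (j : ℕ) : List S := (List.range (j + 1)).map τ

/-- The trace induced by a strategy `σ : S⁺ → T` on a trace of the `A`-domain. -/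
def induced {S T : Type} (σ : List S → T) (τ : ℕ → S) : ℕ → T := fun i => σ (pref τ i)

def Executable {PA PB S T : Type} (DA : DynDom PA S) (DB : DynDom PB T)
    (σ : List S → T) : Prop :=
  σ [DA.init] = DB.init ∧ ∀ τ n, IsTrace DA τ n → IsTrace DB (induced σ τ) n

/-- Joint label of a pair of label sets, over the disjoint union of the propositions. -/
def jset {PA PB : Type} (XA : Set PA) (XB : Set PB) : Set (PA ⊕ PB) :=
  Sum.inl '' XA ∪ Sum.inr '' XB

/-- Joint trace label of two (equally long) traces. -/
def jointLabel {PA PB S T : Type} (lA : S → Set PA) (lB : T → Set PB)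
    (τ : ℕ → S) (τ' : ℕ → T) : ℕ → Set (PA ⊕ PB) :=
  fun i => jset (lA (τ i)) (lB (τ' i))

/-- Solution when the stop agent is `A`. -/
def IsSolutionA {PA PB S T : Type} (DA : DynDom PA S) (DB : DynDom PB T)
    (Φ : LTLf (PA ⊕ PB)) (σ : List S → T) : Prop :=
  Executable DA DB σ ∧ ∀ τ n, IsTrace DA τ n →
    LTLf.sat (jointLabel DA.label DB.label τ (induced σ τ)) n 0 Φ

/-- Solution when the stop agent is `B`. -/
def IsSolutionB {PA PB S T : Type} (DA : DynDom PA S) (DB : DynDom PB T)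
    (Φ : LTLf (PA ⊕ PB)) (σ : List S → T) : Prop :=
  Executable DA DB σ ∧ ∀ τ, IsInfTrace DA τ → ∃ n,
    LTLf.sat (jointLabel DA.label DB.label τ (induced σ τ)) n 0 Φ

/-! ### Two-player games -/

structure Arena (N : Type) where
  u0 : N
  alpha : N → N → Prop
  beta : N → N → Prop

def IsPrePlay {N : Type} (A : Arena N) (ρ : ℕ → N) (n : ℕ) : Prop :=
  ρ 0 = A.u0 ∧ ∀ i, i < n →
    (Even i → A.alpha (ρ i) (ρ (i + 1))) ∧ (¬ Even i → A.beta (ρ i) (ρ (i + 1)))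

/-- A play `ρ 0 … ρ n` (with `n` even, ending in a `P1` node). -/
def IsPlay {N : Type} (A : Arena N) (ρ : ℕ → N) (n : ℕ) : Prop :=
  Even n ∧ IsPrePlay A ρ n

/-- The `P2` (V-) nodes of the prefix `ρ 0 … ρ i`, i.e. `ρ 1, ρ 3, …`. -/
def vlist {N : Type} (ρ : ℕ → N) (i : ℕ) : List N :=
  (List.range ((i + 1) / 2)).map fun j => ρ (2 * j + 1)

def Compatible {N : Type} (A : Arena N) (σ' : List N → N) (ρ : ℕ → N) (n : ℕ) : Prop :=
  ∀ i, i < n → ¬ Even i → ρ (i + 1) = σ' (vlist ρ i)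

/-- A `P2` strategy only prescribes legal moves (along plays compatible with it). -/
def StratLegal {N : Type} (A : Arena N) (σ' : List N → N) : Prop :=
  ∀ ρ n, ¬ Even n → IsPrePlay A ρ n → Compatible A σ' ρ n →
    A.beta (ρ n) (σ' (vlist ρ n))

def IsInfPlay {N : Type} (A : Arena N) (ρ : ℕ → N) : Prop :=
  ρ 0 = A.u0 ∧ ∀ i,
    (Even i → A.alpha (ρ i) (ρ (i + 1))) ∧ (¬ Even i → A.beta (ρ i) (ρ (i + 1)))

def CompatibleInf {N : Type} (A : Arena N) (σ' : List N → N) (ρ : ℕ → N) : Prop :=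
  ∀ i, ¬ Even i → ρ (i + 1) = σ' (vlist ρ i)

/-- Winning strategy for the safety objective `Safe(g)`. -/
def WinningSafe {N : Type} (A : Arena N) (g : Set N) (σ' : List N → N) : Prop :=
  StratLegal A σ' ∧ ∀ ρ n, IsPlay A ρ n → Compatible A σ' ρ n →
    ∀ j, j ≤ n → Even j → ρ j ∈ g

/-- Winning strategy for the reachability objective `Reach(g)`:
no matter how `P1` keeps moving, a goal node is eventually reached. -/
def WinningReach {N : Type} (A : Arena N) (g : Set N) (σ' : List N → N) : Prop :=
  StratLegal A σ' ∧ ∀ ρ, IsInfPlay A ρ → CompatibleInf A σ' ρ →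
    ∃ j, Even j ∧ ρ j ∈ g

/-! ### The product arena of the two domains -/

def prodArena {PA PB S T : Type} (DA : DynDom PA S) (DB : DynDom PB T) :
    Arena (S × T) where
  u0 := (DA.init, DB.init)
  alpha := fun u v => DA.δ u.1 v.1 ∧ v.2 = u.2
  beta := fun v u => u.1 = v.1 ∧ DB.δ v.2 u.2

/-! ### Mapping specifications -/

/-- Point-wise mapping specification `⋀_{i} □(φ_i → ψ_i)`. -/
def pointwiseSpec {PA PB : Type} {k : ℕ} (φ : Fin k → BForm PA) (ψ : Fin k → BForm PB) :
    LTLf (PA ⊕ PB) :=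
  LTLf.iconj fun i =>
    LTLf.always (LTLf.imp ((φ i).map Sum.inl).toLTLf ((ψ i).map Sum.inr).toLTLf)

/-- Target mapping specification `⋀_{i} (◇φ_i → ◇ψ_i)`. -/
def targetSpec {PA PB : Type} {k : ℕ} (φ : Fin k → BForm PA) (ψ : Fin k → BForm PB) :
    LTLf (PA ⊕ PB) :=
  LTLf.iconj fun i =>
    LTLf.imp (LTLf.ev ((φ i).map Sum.inl).toLTLf) (LTLf.ev ((ψ i).map Sum.inr).toLTLf)

/-! ### The memory-augmented arena for target mappings -/

def memArena {PA PB S T : Type} {k : ℕ} (DA : DynDom PA S) (DB : DynDom PB T)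
    (φ : Fin k → BForm PA) (ψ : Fin k → BForm PB) :
    Arena (S × T × (Fin k → Prop × Prop)) where
  u0 := (DA.init, DB.init,
    fun i => ((φ i).sat (DA.label DA.init), (ψ i).sat (DB.label DB.init)))
  alpha := fun u v => DA.δ u.1 v.1 ∧ v.2.1 = u.2.1 ∧
    v.2.2 = fun i => ((φ i).sat (DA.label v.1) ∨ (u.2.2 i).1, (u.2.2 i).2)
  beta := fun v u => u.1 = v.1 ∧ DB.δ v.2.1 u.2.1 ∧
    u.2.2 = fun i => ((v.2.2 i).1, (ψ i).sat (DB.label u.2.1) ∨ (v.2.2 i).2)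

/-- `g`: for every `i`, `c_i = 0` or `d_i = 1`. -/
def memGoal {S T : Type} {k : ℕ} : Set (S × T × (Fin k → Prop × Prop)) :=
  {u | ∀ i, (u.2.2 i).1 → (u.2.2 i).2}

/-! ### The DFA-product arena for general LTLf mappings -/

/-- The word `π 0 … π n` as a list. -/
def wordOf {P : Type} (π : ℕ → Set P) (n : ℕ) : List (Set P) := (List.range (n + 1)).map π

def dfaArena {PA PB S T Q : Type} (DA : DynDom PA S) (DB : DynDom PB T)
    (F : DFA (Set (PA ⊕ PB)) Q) : Arena (S × T × Q) where
  u0 := (DA.init, DB.init, F.step F.start (jset (DA.label DA.init) (DB.label DB.init)))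
  alpha := fun u v => DA.δ u.1 v.1 ∧ v.2.1 = u.2.1 ∧ v.2.2 = u.2.2
  beta := fun v u => u.1 = v.1 ∧ DB.δ v.2.1 u.2.1 ∧
    u.2.2 = F.step v.2.2 (jset (DA.label v.1) (DB.label u.2.1))

def dfaGoal {S T α Q : Type} (F : DFA α Q) : Set (S × T × Q) :=
  {u | u.2.2 ∈ F.accept}

/-!
Along a trace `τ` of `D_A` answered by a sequence `τ'` of states of `D_B`, the play of the
product game has even nodes `(τ k, τ' k, q_k)` and odd nodes `(τ (k+1), τ' k, q_k)`, where `q_k`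
is the state of the DFA after the joint label of the prefixes of length `k + 1`; the goal is
reached at `2k` exactly when that joint word is accepted. A solution `σ` gives the strategy
that moves `D_B` as `σ` does and updates the DFA; every play compatible with it has that shape.
Conversely, a winning strategy is simulated along each trace of `D_A`; legality of its moves
forces the simulated play to have that shape, so safety of the play is acceptance of the
joint words.
-/

theorem pref_succ {S : Type} (τ : ℕ → S) (k : ℕ) :
    pref τ (k + 1) = τ 0 :: (List.range (k + 1)).map (fun j => τ (j + 1)) := by
  simp [pref, List.range_succ_eq_map, List.map_map]

theorem vlist_two_mul_add_one {N : Type} (ρ : ℕ → N) (k : ℕ) :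
    vlist ρ (2 * k + 1) = (List.range (k + 1)).map (fun j => ρ (2 * j + 1)) := by
  rw [vlist, show (2 * k + 1 + 1) / 2 = k + 1 by omega]

theorem DFA.eval_wordOf_zero {P Q : Type} (F : DFA (Set P) Q) (π : ℕ → Set P) :
    F.eval (wordOf π 0) = F.step F.start (π 0) :=
  rfl

theorem DFA.eval_wordOf_succ {P Q : Type} (F : DFA (Set P) Q) (π : ℕ → Set P) (k : ℕ) :
    F.eval (wordOf π (k + 1)) = F.step (F.eval (wordOf π k)) (π (k + 1)) := by
  rw [wordOf, List.range_succ, List.map_append, List.map_singleton, DFA.eval_append_singleton]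
  rfl

theorem IsTrace.mono {P S : Type} {D : DynDom P S} {τ : ℕ → S} {m n : ℕ} (h : IsTrace D τ n)
    (hmn : m ≤ n) : IsTrace D τ m :=
  ⟨h.1, fun i hi => h.2 i (by omega)⟩

section Plays

variable {N : Type} (A : Arena N) (ρ : ℕ → N) (n : ℕ)

theorem isPrePlay_succ_iff :
    IsPrePlay A ρ (n + 1) ↔ IsPrePlay A ρ n ∧
      (Even n → A.alpha (ρ n) (ρ (n + 1))) ∧ (¬ Even n → A.beta (ρ n) (ρ (n + 1))) := by
  simp only [IsPrePlay, Nat.lt_succ_iff_lt_or_eq, or_imp, forall_and, forall_eq]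
  tauto

theorem compatible_succ_iff (σ' : List N → N) :
    Compatible A σ' ρ (n + 1) ↔
      Compatible A σ' ρ n ∧ (¬ Even n → ρ (n + 1) = σ' (vlist ρ n)) := by
  simp only [Compatible, Nat.lt_succ_iff_lt_or_eq, or_imp, forall_and, forall_eq]

end Plays

section DfaPlay

variable {PA PB S T Q : Type} (DA : DynDom PA S) (DB : DynDom PB T) (F : DFA (Set (PA ⊕ PB)) Q)

def dfaPlay (τ : ℕ → S) (τ' : ℕ → T) (i : ℕ) : S × T × Q :=
  (τ ((i + 1) / 2), τ' (i / 2), F.eval (wordOf (jointLabel DA.label DB.label τ τ') (i / 2)))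

variable {DA DB F} (τ : ℕ → S) (τ' : ℕ → T) (k : ℕ)

theorem dfaPlay_two_mul : dfaPlay DA DB F τ τ' (2 * k) =
    (τ k, τ' k, F.eval (wordOf (jointLabel DA.label DB.label τ τ') k)) := by
  simp only [dfaPlay, show (2 * k + 1) / 2 = k by omega, show 2 * k / 2 = k by omega]

theorem dfaPlay_two_mul_add_one :
    dfaPlay DA DB F τ τ' (2 * k + 1) = (τ (k + 1), (dfaPlay DA DB F τ τ' (2 * k)).2) := by
  simp only [dfaPlay, show (2 * k + 1 + 1) / 2 = k + 1 by omega, show (2 * k + 1) / 2 = k by omega,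
    show 2 * k / 2 = k by omega]

theorem dfaPlay_two_mul_add_two : dfaPlay DA DB F τ τ' (2 * k + 2) =
    (τ (k + 1), τ' (k + 1), F.step (dfaPlay DA DB F τ τ' (2 * k + 1)).2.2
      (jset (DA.label (τ (k + 1))) (DB.label (τ' (k + 1))))) := by
  rw [show 2 * k + 2 = 2 * (k + 1) by ring, dfaPlay_two_mul, dfaPlay_two_mul_add_one,
    dfaPlay_two_mul, DFA.eval_wordOf_succ]
  rfl

theorem dfaPlay_zero (h : τ 0 = DA.init) (h' : τ' 0 = DB.init) :
    dfaPlay DA DB F τ τ' 0 = (dfaArena DA DB F).u0 := by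
  simp only [dfaPlay, Nat.zero_div, DFA.eval_wordOf_zero, jointLabel, h, h']
  rfl

theorem dfaPlay_mem_dfaGoal_iff : dfaPlay DA DB F τ τ' (2 * k) ∈ dfaGoal F ↔
    F.eval (wordOf (jointLabel DA.label DB.label τ τ') k) ∈ F.accept := by
  rw [dfaPlay_two_mul]
  rfl

theorem dfaArena_alpha_dfaPlay (h : DA.δ (τ k) (τ (k + 1))) :
    (dfaArena DA DB F).alpha (dfaPlay DA DB F τ τ' (2 * k)) (dfaPlay DA DB F τ τ' (2 * k + 1)) := by
  rw [dfaPlay_two_mul_add_one, dfaPlay_two_mul]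
  exact ⟨h, rfl, rfl⟩

theorem dfaArena_beta_dfaPlay (h : DB.δ (τ' k) (τ' (k + 1))) :
    (dfaArena DA DB F).beta (dfaPlay DA DB F τ τ' (2 * k + 1))
      (dfaPlay DA DB F τ τ' (2 * k + 2)) := by
  rw [dfaPlay_two_mul_add_two, dfaPlay_two_mul_add_one, dfaPlay_two_mul]
  exact ⟨rfl, h, rfl⟩

theorem eq_dfaPlay_of_beta {u : S × T × Q}
    (h : (dfaArena DA DB F).beta (dfaPlay DA DB F τ τ' (2 * k + 1)) u) (ht : u.2.1 = τ' (k + 1)) :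
    u = dfaPlay DA DB F τ τ' (2 * k + 2) := by
  obtain ⟨hs, -, hq⟩ := h
  rw [← hs] at hq
  rw [dfaPlay_two_mul_add_two, ← ht, show τ (k + 1) = u.1 by rw [hs, dfaPlay_two_mul_add_one], ← hq]

theorem isTrace_of_isPrePlay_dfaPlay {m : ℕ} (h0 : τ' 0 = DB.init)
    (h : IsPrePlay (dfaArena DA DB F) (dfaPlay DA DB F τ τ') (2 * m)) : IsTrace DB τ' m := by
  refine ⟨h0, fun k hk => ?_⟩
  have hβ := (h.2 (2 * k + 1) (by omega)).2 (Nat.not_even_two_mul_add_one k)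
  rw [dfaPlay_two_mul_add_two, dfaPlay_two_mul_add_one, dfaPlay_two_mul] at hβ
  exact hβ.2.1

end DfaPlay

section SolutionToStrategy

variable {PA PB S T Q : Type} (DA : DynDom PA S) (DB : DynDom PB T) (F : DFA (Set (PA ⊕ PB)) Q)

def IsSolutionDFA (σ : List S → T) : Prop :=
  Executable DA DB σ ∧ ∀ τ n, IsTrace DA τ n →
    F.eval (wordOf (jointLabel DA.label DB.label τ (induced σ τ)) n) ∈ F.accept

def traceOfPlay (ρ : ℕ → S × T × Q) : ℕ → S
  | 0 => DA.init
  | k + 1 => (ρ (2 * k + 1)).1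

def strategyOfSolution (σ : List S → T) (l : List (S × T × Q)) : S × T × Q :=
  let v := l.getLastD (DA.init, DB.init, F.start)
  let t := σ (DA.init :: l.map Prod.fst)
  (v.1, t, F.step v.2.2 (jset (DA.label v.1) (DB.label t)))

variable {DA DB F} {σ : List S → T} {ρ : ℕ → S × T × Q} {n : ℕ}

theorem isTrace_traceOfPlay (h : IsPrePlay (dfaArena DA DB F) ρ n) :
    IsTrace DA (traceOfPlay DA ρ) ((n + 1) / 2) := by
  refine ⟨rfl, fun i hi => ?_⟩
  have hfst : (ρ (2 * i)).1 = traceOfPlay DA ρ i := by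
    cases i with
    | zero => rw [h.1]; rfl
    | succ j => exact ((h.2 (2 * j + 1) (by omega)).2 (Nat.not_even_two_mul_add_one j)).1
  have hα := (h.2 (2 * i) (by omega)).1 (even_two_mul i)
  rw [← hfst]
  exact hα.1

theorem strategyOfSolution_vlist (k : ℕ) (h : ρ (2 * k + 1) =
      dfaPlay DA DB F (traceOfPlay DA ρ) (induced σ (traceOfPlay DA ρ)) (2 * k + 1)) :
    strategyOfSolution DA DB F σ (vlist ρ (2 * k + 1)) =
      dfaPlay DA DB F (traceOfPlay DA ρ) (induced σ (traceOfPlay DA ρ)) (2 * k + 2) := by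
  have hlast : (vlist ρ (2 * k + 1)).getLastD (DA.init, DB.init, F.start) = ρ (2 * k + 1) := by
    simp [vlist_two_mul_add_one, List.range_succ]
  have hfst : DA.init :: (vlist ρ (2 * k + 1)).map Prod.fst = pref (traceOfPlay DA ρ) (k + 1) := by
    simp only [vlist_two_mul_add_one, pref_succ, List.map_map]
    rfl
  simp only [strategyOfSolution, hlast, hfst, h, dfaPlay_two_mul_add_two, dfaPlay_two_mul_add_one]
  rfl

theorem eq_dfaPlay_of_compatible (hσ : σ [DA.init] = DB.init)
    (hp : IsPrePlay (dfaArena DA DB F) ρ n)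
    (hc : Compatible (dfaArena DA DB F) (strategyOfSolution DA DB F σ) ρ n) :
    ∀ i ≤ n, ρ i = dfaPlay DA DB F (traceOfPlay DA ρ) (induced σ (traceOfPlay DA ρ)) i := by
  intro i
  induction i with
  | zero => exact fun _ => hp.1.trans (dfaPlay_zero _ _ rfl hσ).symm
  | succ i ih =>
    intro hi
    obtain ⟨k, rfl | rfl⟩ := Nat.even_or_odd' i
    · obtain ⟨-, hs, hq⟩ := (hp.2 (2 * k) (by omega)).1 (even_two_mul k)
      rw [dfaPlay_two_mul_add_one, ← ih (by omega)]
      exact Prod.ext rfl (Prod.ext hs hq)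
    · rw [hc (2 * k + 1) hi (Nat.not_even_two_mul_add_one k)]
      exact strategyOfSolution_vlist k (ih (by omega))

theorem IsSolutionDFA.winningSafe (hσ : IsSolutionDFA DA DB F σ) :
    WinningSafe (dfaArena DA DB F) (dfaGoal F) (strategyOfSolution DA DB F σ) := by
  obtain ⟨⟨hinit, hexec⟩, hacc⟩ := hσ
  refine ⟨fun ρ n hodd hp hc => ?_, fun ρ n hplay hc j hj hje => ?_⟩
  · obtain ⟨k, rfl⟩ := Nat.odd_iff.mpr (Nat.not_even_iff.mp hodd)
    have hρ := eq_dfaPlay_of_compatible hinit hp hc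
    rw [hρ _ le_rfl, strategyOfSolution_vlist k (hρ _ le_rfl)]
    have htr := hexec _ _ (isTrace_traceOfPlay hp)
    exact dfaArena_beta_dfaPlay _ _ k (htr.2 k (by omega))
  · obtain ⟨r, rfl⟩ := hje
    rw [← two_mul] at hj ⊢
    rw [eq_dfaPlay_of_compatible hinit hplay.2 hc _ hj, dfaPlay_mem_dfaGoal_iff]
    exact hacc _ _ ((isTrace_traceOfPlay hplay.2).mono (by omega))

end SolutionToStrategy

section StrategyToSolution

variable {PA PB S T Q : Type} (DA : DynDom PA S) (DB : DynDom PB T) (F : DFA (Set (PA ⊕ PB)) Q)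

/-- The `k`-th even node of the play of `σ'` against `τ`, with the list of odd nodes before it. -/
def simulate (σ' : List (S × T × Q) → S × T × Q) (τ : ℕ → S) :
    ℕ → (S × T × Q) × List (S × T × Q)
  | 0 => ((τ 0, DB.init, F.step F.start (jset (DA.label (τ 0)) (DB.label DB.init))), [])
  | k + 1 =>
    let vs := (simulate σ' τ k).2 ++ [(τ (k + 1), (simulate σ' τ k).1.2)]
    (σ' vs, vs)

def solutionOfStrategy (σ' : List (S × T × Q) → S × T × Q) (l : List S) : T :=
  (simulate DA DB F σ' (fun i => l.getD i DA.init) (l.length - 1)).1.2.1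

variable {DA DB F} {σ' : List (S × T × Q) → S × T × Q}

theorem simulate_snd (τ : ℕ → S) (k : ℕ) :
    (simulate DA DB F σ' τ k).2 =
      (List.range k).map (fun j => (τ (j + 1), (simulate DA DB F σ' τ j).1.2)) := by
  induction k with
  | zero => rfl
  | succ k ih => rw [List.range_succ, List.map_append, ← ih]; rfl

theorem simulate_congr {τ τ' : ℕ → S} {k : ℕ} (h : ∀ i ≤ k, τ i = τ' i) :
    simulate DA DB F σ' τ k = simulate DA DB F σ' τ' k := by
  induction k with
  | zero => simp only [simulate, h 0 le_rfl]
  | succ k ih => simp only [simulate, ih (fun i hi => h i (by omega)), h (k + 1) le_rfl]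

theorem induced_solutionOfStrategy (τ : ℕ → S) (k : ℕ) :
    induced (solutionOfStrategy DA DB F σ') τ k = (simulate DA DB F σ' τ k).1.2.1 := by
  have hlen : (pref τ k).length - 1 = k := by simp [pref]
  rw [induced, solutionOfStrategy, hlen, simulate_congr fun i hi => ?_]
  simp [pref, List.getD_eq_getElem?_getD, Nat.lt_succ_of_le hi]

theorem simulate_eq_dfaPlay (hleg : StratLegal (dfaArena DA DB F) σ') {τ : ℕ → S} {τ' : ℕ → T}
    (hτ' : ∀ j, τ' j = (simulate DA DB F σ' τ j).1.2.1) {m : ℕ} (hτ : IsTrace DA τ m) {k : ℕ}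
    (hk : k ≤ m) :
    (∀ j ≤ k, (simulate DA DB F σ' τ j).1 = dfaPlay DA DB F τ τ' (2 * j)) ∧
      IsPrePlay (dfaArena DA DB F) (dfaPlay DA DB F τ τ') (2 * k) ∧
      Compatible (dfaArena DA DB F) σ' (dfaPlay DA DB F τ τ') (2 * k) := by
  set ρ := dfaPlay DA DB F τ τ'
  induction k with
  | zero =>
    refine ⟨fun j hj => ?_, ⟨dfaPlay_zero _ _ hτ.1 (hτ' 0), by omega⟩, fun i hi => by omega⟩
    obtain rfl : j = 0 := by omega
    simp only [ρ, dfaPlay_two_mul, hτ', DFA.eval_wordOf_zero, jointLabel]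
    rfl
  | succ k ih =>
    obtain ⟨hsim, hp, hc⟩ := ih (by omega)
    have hα : (dfaArena DA DB F).alpha (ρ (2 * k)) (ρ (2 * k + 1)) :=
      dfaArena_alpha_dfaPlay τ τ' k (hτ.2 k (by omega))
    have hp' : IsPrePlay (dfaArena DA DB F) ρ (2 * k + 1) :=
      (isPrePlay_succ_iff _ _ _).2 ⟨hp, fun _ => hα, fun h => (h (even_two_mul k)).elim⟩
    have hc' : Compatible (dfaArena DA DB F) σ' ρ (2 * k + 1) :=
      (compatible_succ_iff _ _ _ _).2 ⟨hc, fun h => (h (even_two_mul k)).elim⟩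
    have hvlist : vlist ρ (2 * k + 1) = (simulate DA DB F σ' τ (k + 1)).2 := by
      rw [vlist_two_mul_add_one, simulate_snd]
      refine List.map_congr_left fun j hj => ?_
      rw [hsim j (by simp at hj; omega)]
      exact dfaPlay_two_mul_add_one τ τ' j
    have hβ := hleg ρ (2 * k + 1) (Nat.not_even_two_mul_add_one k) hp' hc'
    have hsim_succ : (simulate DA DB F σ' τ (k + 1)).1 = σ' (vlist ρ (2 * k + 1)) := by
      rw [hvlist]
      rfl
    have hnext : σ' (vlist ρ (2 * k + 1)) = ρ (2 * k + 2) :=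
      eq_dfaPlay_of_beta τ τ' k hβ (by rw [hτ', hsim_succ])
    rw [show 2 * (k + 1) = 2 * k + 1 + 1 by ring, isPrePlay_succ_iff, compatible_succ_iff, ← hnext]
    refine ⟨fun j hj => ?_, ⟨hp', fun h => absurd h (Nat.not_even_two_mul_add_one k), fun _ => hβ⟩,
      hc', fun _ => rfl⟩
    rcases Nat.le_succ_iff.1 hj with hj | rfl
    · exact hsim j hj
    · exact hsim_succ.trans hnext

theorem WinningSafe.isSolutionDFA_solutionOfStrategy
    (hσ' : WinningSafe (dfaArena DA DB F) (dfaGoal F) σ') :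
    IsSolutionDFA DA DB F (solutionOfStrategy DA DB F σ') := by
  obtain ⟨hleg, hwin⟩ := hσ'
  have hτ' (τ : ℕ → S) := induced_solutionOfStrategy (DA := DA) (DB := DB) (F := F) (σ' := σ') τ
  have hplay {τ : ℕ → S} {n : ℕ} (hτ : IsTrace DA τ n) :=
    (simulate_eq_dfaPlay hleg (hτ' τ) hτ le_rfl).2
  refine ⟨⟨rfl, fun τ n hτ => isTrace_of_isPrePlay_dfaPlay τ _ (hτ' τ 0) (hplay hτ).1⟩,
    fun τ n hτ => ?_⟩
  rw [← dfaPlay_mem_dfaGoal_iff]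
  exact hwin _ _ ⟨even_two_mul n, (hplay hτ).1⟩ (hplay hτ).2 _ le_rfl (even_two_mul n)

end StrategyToSolution

theorem isSolutionA_iff_isSolutionDFA {PA PB S T Q : Type} {DA : DynDom PA S} {DB : DynDom PB T}
    {Φ : LTLf (PA ⊕ PB)} {F : DFA (Set (PA ⊕ PB)) Q}
    (hF : ∀ (π : ℕ → Set (PA ⊕ PB)) (n : ℕ), F.eval (wordOf π n) ∈ F.accept ↔ LTLf.sat π n 0 Φ)
    (σ : List S → T) : IsSolutionA DA DB Φ σ ↔ IsSolutionDFA DA DB F σ := by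
  simp only [IsSolutionA, IsSolutionDFA, hF]

theorem mbsd_general_stopA_iff_safety_game_general
    {PA PB S T Q : Type}
    (DA : DynDom PA S) (DB : DynDom PB T)
    (Φ : LTLf (PA ⊕ PB)) (F : DFA (Set (PA ⊕ PB)) Q)
    (hF : ∀ (π : ℕ → Set (PA ⊕ PB)) (n : ℕ),
      F.eval (wordOf π n) ∈ F.accept ↔ LTLf.sat π n 0 Φ) :
    (∃ σ : List S → T, IsSolutionA DA DB Φ σ) ↔
      (∃ σ' : List (S × T × Q) → S × T × Q,
        WinningSafe (dfaArena DA DB F) (dfaGoal (S := S) (T := T) F) σ') := by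
  simp only [isSolutionA_iff_isSolutionDFA hF]
  exact ⟨fun ⟨σ, hσ⟩ => ⟨_, hσ.winningSafe⟩,
    fun ⟨_, hσ'⟩ => ⟨_, hσ'.isSolutionDFA_solutionOfStrategy⟩⟩

/-- for an arbitrary LTLf mapping specification `Φ` and stop agent `A`,
given a DFA `F` accepting exactly the finite nonempty words satisfying `Φ`, the MBSD
instance has a solution iff Player 2 has a winning strategy in the safety game on the
product arena with the DFA. -/
theorem mbsd_general_stopA_iff_safety_game
    {PA PB S T Q : Type} [Fintype PA] [Fintype PB] [Fintype S] [Fintype T] [Fintype Q]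
    (DA : DynDom PA S) (DB : DynDom PB T)
    (hserA : ∀ s, ∃ s', DA.δ s s') (hserB : ∀ t, ∃ t', DB.δ t t')
    (Φ : LTLf (PA ⊕ PB)) (F : DFA (Set (PA ⊕ PB)) Q)
    (hF : ∀ (π : ℕ → Set (PA ⊕ PB)) (n : ℕ),
      F.eval (wordOf π n) ∈ F.accept ↔ LTLf.sat π n 0 Φ) :
    (∃ σ : List S → T, IsSolutionA DA DB Φ σ) ↔
      (∃ σ' : List (S × T × Q) → S × T × Q,
        WinningSafe (dfaArena DA DB F) (dfaGoal (S := S) (T := T) F) σ') :=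
  mbsd_general_stopA_iff_safety_game_general DA DB Φ F hF
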